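/- Let C1 and C2 be convolutional codes in F[x]^n of rank k and let φ : C1 → C2 be a j'-equivalence for some j' ∈ ℕ. Then d_j^r(C1) = d_j^r(C2) for every 1 ≤ r ≤ k and every 0 ≤ j ≤ j'. -/

import Mathlib

open Polynomial

namespace ConvCode

variable {F : Type*} [Field F] [Fintype F] {n k : ℕ}

/-- Weight of a polynomial vector: total number of nonzero coefficients. -/
noncomputable def wtv (c : Fin n → Polynomial F) : ℕ := ∑ ℓ, (c ℓ).support.card

/-- Truncation of a polynomial, keeping the coefficients of degrees `h` through `j`. -/
noncomputable def truncp (h j : ℕ) (p : Polynomial F) : Polynomial F :=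
  ∑ i ∈ Finset.Icc h j, Polynomial.C (p.coeff i) * Polynomial.X ^ i

/-- Truncation `c_{[h,j]}` of a polynomial vector. -/
noncomputable def truncv (h j : ℕ) (c : Fin n → Polynomial F) : Fin n → Polynomial F :=
  fun ℓ => truncp h j (c ℓ)

/-- Degree of a polynomial vector: the largest `i` such that `c[i] ≠ 0`. -/
def degv (c : Fin n → Polynomial F) : ℕ := Finset.univ.sup fun ℓ => (c ℓ).natDegree

/-- `φ` is a `j`-equivalence: it preserves weights of `j`-th truncations. -/
def IsJEquiv (C1 C2 : Submodule (Polynomial F) (Fin n → Polynomial F))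
    (φ : C1 ≃ₗ[Polynomial F] C2) (j : ℕ) : Prop :=
  ∀ c : C1, wtv (truncv 0 j (c : Fin n → Polynomial F)) =
    wtv (truncv 0 j ((φ c : C2) : Fin n → Polynomial F))

/-- `φ` is an equivalence: it is a `j`-equivalence for every `j`. -/
def IsEquiv (C1 C2 : Submodule (Polynomial F) (Fin n → Polynomial F))
    (φ : C1 ≃ₗ[Polynomial F] C2) : Prop := ∀ j : ℕ, IsJEquiv C1 C2 φ j

/-- `φ` is an isometry: it preserves weights. -/
def IsIsometry (C1 C2 : Submodule (Polynomial F) (Fin n → Polynomial F))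
    (φ : C1 ≃ₗ[Polynomial F] C2) : Prop :=
  ∀ c : C1, wtv (c : Fin n → Polynomial F) = wtv ((φ c : C2) : Fin n → Polynomial F)

/-- `G` is a generator matrix of `C`: its rows form an `F[x]`-basis of `C`. -/
def IsGenMat (C : Submodule (Polynomial F) (Fin n → Polynomial F))
    (G : Matrix (Fin k) (Fin n) (Polynomial F)) : Prop :=
  LinearIndependent (Polynomial F) (fun i => G i) ∧
    Submodule.span (Polynomial F) (Set.range fun i => G i) = C

/-- `G` is row reduced: its leading row coefficient matrix has full rank. -/
def RowReduced (G : Matrix (Fin k) (Fin n) (Polynomial F)) : Prop :=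
  LinearIndependent F (fun i => fun ℓ => (G i ℓ).coeff (degv (G i)))

/-- `C` is noncatastrophic: it has a generator matrix with a polynomial right inverse
whose constant term has rank `k`. -/
def Noncatastrophic (C : Submodule (Polynomial F) (Fin n → Polynomial F)) (k : ℕ) : Prop :=
  ∃ G : Matrix (Fin k) (Fin n) (Polynomial F), IsGenMat C G ∧
    (∃ H : Matrix (Fin n) (Fin k) (Polynomial F), G * H = 1) ∧
    LinearIndependent F (fun i => fun ℓ => (G i ℓ).eval 0)

/-- Joint support of a family of polynomial vectors: the pairs `(ℓ, i)` such that the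
coefficient of `x^i` in the `ℓ`-th coordinate of some member is nonzero. -/
def gsupp {r : ℕ} (d : Fin r → Fin n → Polynomial F) : Set (Fin n × ℕ) :=
  { q | ∃ s, ((d s) q.1).coeff q.2 ≠ 0 }

/-- The `(r,j)`-generalized column distance of the code generated by `G`. -/
noncomputable def gcdJ (G : Matrix (Fin k) (Fin n) (Polynomial F)) (r j : ℕ) : ℕ :=
  sInf { m | ∃ p : Fin r → Fin k → Polynomial F,
    LinearIndependent F (fun s => fun l => (p s l).eval 0) ∧
    m = (gsupp fun s => truncv 0 j (Matrix.vecMul (p s) G)).ncard }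

/-- The `r`-generalized column distance: the limit as `j → ∞` of the `(r,j)`-generalized
column distances. -/
noncomputable def gcdLim (G : Matrix (Fin k) (Fin n) (Polynomial F)) (r : ℕ) : ℕ :=
  Filter.limsup (fun j => gcdJ G r j) Filter.atTop

/-- Evaluation at `0`, as an `F`-linear map `F[x]^n → F^n`. -/
noncomputable def ev0 : (Fin n → Polynomial F) →ₗ[F] (Fin n → F) :=
  LinearMap.pi fun ℓ => (Polynomial.aeval (0 : F)).toLinearMap.comp (LinearMap.proj ℓ)

/-- `C[0] = {c(0) : c ∈ C} ⊆ F^n`. -/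
noncomputable def evalZero (C : Submodule (Polynomial F) (Fin n → Polynomial F)) :
    Submodule F (Fin n → F) := (C.restrictScalars F).map ev0

/-- The `r`-th generalized Hamming weight of a block code `L ⊆ F^n`. -/
noncomputable def hammingGW (L : Submodule F (Fin n → F)) (r : ℕ) : ℕ :=
  sInf { m | ∃ V : Submodule F (Fin n → F), V ≤ L ∧ Module.finrank F V = r ∧
    m = { ℓ : Fin n | ∃ v ∈ V, v ℓ ≠ 0 }.ncard }

/-- The `r`-th generalized weight of a convolutional code. -/
noncomputable def genWt (C : Submodule (Polynomial F) (Fin n → Polynomial F)) (r : ℕ) : ℕ :=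
  sInf { m | ∃ d : Fin r → Fin n → Polynomial F, (∀ s, d s ∈ C) ∧
    (r : Cardinal) ≤ Module.rank (Polynomial F)
      ↥(Submodule.span (Polynomial F) (Set.range d)) ∧
    m = (gsupp d).ncard }

/-- The free distance of a convolutional code. -/
noncomputable def dfree (C : Submodule (Polynomial F) (Fin n → Polynomial F)) : ℕ :=
  sInf { m | ∃ c : Fin n → Polynomial F, c ∈ C ∧ c ≠ 0 ∧ m = wtv c }

end ConvCode

open ConvCode

/-!
Averaging over `F`-linear combinations: a position `(ℓ, i)` in the joint support of
`c_1, …, c_r` is nonzero in exactly `(q - 1) q^(r-1)` of the `q^r` combinations `∑ a_s c_s`, so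
`∑_a wt((∑ a_s c_s)_{[0,j]}) = (q - 1) q^(r-1) · |supp{(c_s)_{[0,j]}}|`. A `j'`-equivalence is
`F[x]`-linear and, after shifting by `x^(j'-j)`, also a `j`-equivalence, so it preserves the
left-hand side and hence the support size. It sends the codewords `p_s G₁` to codewords `p'_s G₂`
with `p' = M p` for a unimodular `M`, and `(M p)(0) = M(0) p(0)` with `M(0)` invertible, so the
independence of the `p_s(0)` is preserved.
-/

open scoped Finset Matrix

theorem Module.Dual.card_apply_ne_zero {K V : Type*} [Field K] [Fintype K] [DecidableEq K]
    [AddCommGroup V] [Module K V] [Fintype V] {f : Module.Dual K V} (hf : f ≠ 0) :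
    #{a | f a ≠ 0} = (Fintype.card K - 1) * Fintype.card K ^ (Module.finrank K V - 1) := by
  obtain ⟨d, hd⟩ : ∃ d, Module.finrank K V = d + 1 :=
    ⟨_, (f.finrank_ker_add_one_of_ne_zero hf).symm⟩
  have hker : #{a | f a = 0} = Fintype.card K ^ d := by
    classical
    have hdim : Module.finrank K (LinearMap.ker f) = d := by
      have := f.finrank_ker_add_one_of_ne_zero hf
      omega
    calc #{a | f a = 0} = Fintype.card (LinearMap.ker f) := by
          rw [← Fintype.card_subtype]
          exact Fintype.card_congr (Equiv.subtypeEquivRight fun a => LinearMap.mem_ker.symm)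
      _ = Fintype.card K ^ d := by rw [Module.card_eq_pow_finrank (K := K), hdim]
  have hsplit := Finset.card_filter_add_card_filter_not (s := Finset.univ) (fun a => f a = 0)
  rw [hker, Finset.card_univ, Module.card_eq_pow_finrank (K := K) (V := V), hd, pow_succ']
    at hsplit
  rw [hd, Nat.add_sub_cancel, Nat.sub_one_mul]
  simp only [ne_eq] at hsplit ⊢
  omega

theorem LinearIndependent.map_pi_linearEquiv {ι κ R K : Type*} [Fintype ι] [DecidableEq ι]
    [CommRing R] [CommRing K] (f : R →+* K) (ψ : (ι → R) ≃ₗ[R] (ι → R)) {v : κ → ι → R}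
    (hv : LinearIndependent K fun s i => f (v s i)) :
    LinearIndependent K fun s i => f (ψ (v s) i) := by
  set M := LinearMap.toMatrix' ψ.toLinearMap
  have hM : IsUnit (f.mapMatrix M) := by
    rw [Matrix.isUnit_iff_isUnit_det, ← RingHom.map_det, LinearMap.det_toMatrix']
    exact ψ.isUnit_det'.map f
  have hψ : (fun s i => f (ψ (v s) i)) = (f.mapMatrix M).mulVecLin ∘ fun s i => f (v s i) := by
    funext s i
    rw [Function.comp_apply, Matrix.mulVecLin_apply, RingHom.mapMatrix_apply,
      show (fun i => f (v s i)) = f ∘ v s from rfl, ← RingHom.map_mulVec,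
      LinearMap.toMatrix'_mulVec, LinearEquiv.coe_coe]
  rw [hψ]
  exact hv.map' _ (LinearMap.ker_eq_bot.mpr (Matrix.mulVec_injective_of_isUnit hM))

theorem Polynomial.support_mul_X_pow {R : Type*} [Semiring R] (p : R[X]) (m : ℕ) :
    (p * X ^ m).support = p.support.map (addRightEmbedding m) := by
  ext i
  simp only [mem_support_iff, coeff_mul_X_pow', Finset.mem_map, addRightEmbedding_apply]
  constructor
  · intro h
    by_cases hm : m ≤ i
    · exact ⟨i - m, by simpa [hm] using h, Nat.sub_add_cancel hm⟩
    · simp [hm] at h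
  · rintro ⟨a, ha, rfl⟩
    simpa using ha

theorem Matrix.card_dotProduct_ne_zero {K ι : Type*} [Field K] [Fintype K] [DecidableEq K]
    [Fintype ι] [DecidableEq ι] {v : ι → K} (hv : v ≠ 0) :
    #{a | v ⬝ᵥ a ≠ 0} = (Fintype.card K - 1) * Fintype.card K ^ (Fintype.card ι - 1) := by
  have hf : dotProductEquiv K ι v ≠ 0 := by simpa using hv
  simpa [Module.finrank_fin_fun] using Module.Dual.card_apply_ne_zero hf

namespace ConvCode

variable {F : Type*} [Field F] {n : ℕ}

theorem coeff_truncp (h j i : ℕ) (p : F[X]) :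
    (truncp h j p).coeff i = if i ∈ Finset.Icc h j then p.coeff i else 0 := by
  simp only [truncp, finsetSum_coeff, coeff_C_mul_X_pow]
  rw [Finset.sum_ite_eq]

theorem support_truncp [DecidableEq F] (j : ℕ) (p : F[X]) :
    (truncp 0 j p).support = {i ∈ Finset.range (j + 1) | p.coeff i ≠ 0} := by
  ext i
  simp only [mem_support_iff, coeff_truncp, Finset.mem_Icc, Finset.mem_filter, Finset.mem_range,
    Nat.lt_succ_iff, zero_le, true_and]
  split_ifs with h <;> simp [h]

theorem truncp_mul_X_pow (j m : ℕ) (p : F[X]) :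
    truncp 0 (j + m) (p * X ^ m) = truncp 0 j p * X ^ m := by
  ext i
  simp only [coeff_truncp, coeff_mul_X_pow', Finset.mem_Icc, zero_le, true_and]
  split_ifs <;> first | rfl | omega

theorem wtv_truncv_X_pow_smul (j m : ℕ) (c : Fin n → F[X]) :
    wtv (truncv 0 (j + m) ((X : F[X]) ^ m • c)) = wtv (truncv 0 j c) := by
  refine Finset.sum_congr rfl fun ℓ _ => ?_
  rw [truncv, truncv, Pi.smul_apply, smul_eq_mul, mul_comm, truncp_mul_X_pow,
    support_mul_X_pow, Finset.card_map]

theorem wtv_truncv_eq_sum [DecidableEq F] (j : ℕ) (c : Fin n → F[X]) :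
    wtv (truncv 0 j c) =
      ∑ q ∈ Finset.univ ×ˢ Finset.range (j + 1), if (c q.1).coeff q.2 ≠ 0 then 1 else 0 := by
  rw [Finset.sum_product]
  refine Finset.sum_congr rfl fun ℓ _ => ?_
  rw [truncv, support_truncp, Finset.card_filter]

theorem gsupp_truncv [DecidableEq F] {r : ℕ} (j : ℕ) (c : Fin r → Fin n → F[X]) :
    gsupp (fun s => truncv 0 j (c s)) =
      ↑{q ∈ (Finset.univ : Finset (Fin n)) ×ˢ Finset.range (j + 1) |
          (fun s => (c s q.1).coeff q.2) ≠ 0} := by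
  ext ⟨ℓ, i⟩
  simp only [gsupp, truncv, coeff_truncp, Finset.mem_Icc, zero_le, true_and, Set.mem_ofPred_eq,
    Finset.coe_filter, Finset.mem_product, Finset.mem_univ, Finset.mem_range, Nat.lt_succ_iff,
    ne_eq, funext_iff, Pi.zero_apply, not_forall]
  by_cases h : i ≤ j <;> simp [h]

theorem coeff_sum_smul {r : ℕ} (a : Fin r → F) (c : Fin r → Fin n → F[X]) (ℓ : Fin n) (i : ℕ) :
    ((∑ s, a s • c s) ℓ).coeff i = (fun s => (c s ℓ).coeff i) ⬝ᵥ a := by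
  simp [Finset.sum_apply, finsetSum_coeff, dotProduct, mul_comm]

theorem sum_wtv_truncv_sum_smul [Fintype F] [DecidableEq F] {r : ℕ} (j : ℕ)
    (c : Fin r → Fin n → F[X]) :
    ∑ a : Fin r → F, wtv (truncv 0 j (∑ s, a s • c s)) =
      (Fintype.card F - 1) * Fintype.card F ^ (r - 1) *
        (gsupp fun s => truncv 0 j (c s)).ncard := by
  set v : Fin n × ℕ → Fin r → F := fun q s => (c s q.1).coeff q.2
  rw [gsupp_truncv, Set.ncard_coe_finset, Finset.card_filter, Finset.mul_sum]
  simp only [wtv_truncv_eq_sum, coeff_sum_smul]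
  rw [Finset.sum_comm]
  refine Finset.sum_congr rfl fun q _ => ?_
  rw [← Finset.card_filter]
  by_cases hq : v q = 0
  · simp [v, hq]
  · simpa [v, hq] using Matrix.card_dotProduct_ne_zero hq

theorem IsJEquiv.mono {C1 C2 : Submodule F[X] (Fin n → F[X])} {φ : C1 ≃ₗ[F[X]] C2} {j' : ℕ}
    (hφ : IsJEquiv C1 C2 φ j') {j : ℕ} (hj : j ≤ j') : IsJEquiv C1 C2 φ j := by
  intro c
  obtain ⟨m, rfl⟩ := Nat.exists_eq_add_of_le hj
  have := hφ ((X : F[X]) ^ m • c)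
  rwa [map_smul, Submodule.coe_smul, Submodule.coe_smul, wtv_truncv_X_pow_smul,
    wtv_truncv_X_pow_smul] at this

theorem IsJEquiv.symm {C1 C2 : Submodule F[X] (Fin n → F[X])} {φ : C1 ≃ₗ[F[X]] C2} {j : ℕ}
    (hφ : IsJEquiv C1 C2 φ j) : IsJEquiv C2 C1 φ.symm j := fun c => by
  simpa using (hφ (φ.symm c)).symm

namespace IsGenMat

variable {k : ℕ} {C : Submodule F[X] (Fin n → F[X])} {G : Matrix (Fin k) (Fin n) F[X]}

noncomputable def basis (hG : IsGenMat C G) : Module.Basis (Fin k) F[X] C :=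
  (Module.Basis.span hG.1).map (LinearEquiv.ofEq _ _ hG.2)

theorem coe_basis_equivFun_symm (hG : IsGenMat C G) (p : Fin k → F[X]) :
    (hG.basis.equivFun.symm p : Fin n → F[X]) = p ᵥ* G := by
  ext ℓ
  simp [basis, Module.Basis.span_apply, Matrix.vecMul, dotProduct, Finset.sum_apply]

end IsGenMat

theorem IsJEquiv.exists_gsupp_ncard_eq [Fintype F] {k r j : ℕ}
    {C1 C2 : Submodule F[X] (Fin n → F[X])} {G1 G2 : Matrix (Fin k) (Fin n) F[X]}
    (hG1 : IsGenMat C1 G1) (hG2 : IsGenMat C2 G2) {φ : C1 ≃ₗ[F[X]] C2}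
    (hφ : IsJEquiv C1 C2 φ j) {p : Fin r → Fin k → F[X]}
    (hp : LinearIndependent F fun s l => (p s l).eval 0) :
    ∃ p' : Fin r → Fin k → F[X], LinearIndependent F (fun s l => (p' s l).eval 0) ∧
      (gsupp fun s => truncv 0 j (p' s ᵥ* G2)).ncard =
        (gsupp fun s => truncv 0 j (p s ᵥ* G1)).ncard := by
  classical
  set e1 := hG1.basis.equivFun.symm
  set ψ := e1.trans (φ.trans hG2.basis.equivFun)
  have hψp := LinearIndependent.map_pi_linearEquiv (evalRingHom 0) ψ (v := p)
    (by simpa only [coe_evalRingHom] using hp)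
  simp only [coe_evalRingHom] at hψp
  refine ⟨fun s => ψ (p s), hψp, ?_⟩
  have hcodeword1 : ∀ s, p s ᵥ* G1 = (e1 (p s) : Fin n → F[X]) := fun s =>
    (hG1.coe_basis_equivFun_symm (p s)).symm
  have hcodeword2 : ∀ s, ψ (p s) ᵥ* G2 = (φ (e1 (p s)) : Fin n → F[X]) := fun s => by
    rw [← hG2.coe_basis_equivFun_symm]
    simp [ψ]
  have hφ_smul : ∀ (c : F) (y : C1), φ (c • y) = c • φ y := fun c y =>
    φ.toLinearMap.map_smul_of_tower c y
  have hfactor : 0 < (Fintype.card F - 1) * Fintype.card F ^ (r - 1) :=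
    Nat.mul_pos (Nat.sub_pos_of_lt Fintype.one_lt_card) (Nat.pow_pos Fintype.card_pos)
  refine Nat.eq_of_mul_eq_mul_left hfactor ?_
  rw [← sum_wtv_truncv_sum_smul, ← sum_wtv_truncv_sum_smul]
  refine Finset.sum_congr rfl fun a _ => ?_
  have := hφ (∑ s, a s • e1 (p s))
  simp only [map_sum, hφ_smul, Submodule.coe_sum, Submodule.coe_smul_of_tower] at this
  simpa only [hcodeword1, hcodeword2] using this.symm

end ConvCode

theorem gcdJ_jEquiv_invariant_general {F : Type*} [Field F] [Fintype F] {n k : ℕ}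
    (C1 C2 : Submodule (Polynomial F) (Fin n → Polynomial F))
    (G1 : Matrix (Fin k) (Fin n) (Polynomial F)) (hG1 : IsGenMat C1 G1)
    (G2 : Matrix (Fin k) (Fin n) (Polynomial F)) (hG2 : IsGenMat C2 G2)
    (φ : C1 ≃ₗ[Polynomial F] C2) (j' : ℕ) (hφ : IsJEquiv C1 C2 φ j') :
    ∀ r : ℕ, 1 ≤ r → r ≤ k → ∀ j : ℕ, j ≤ j' → gcdJ G1 r j = gcdJ G2 r j := by
  intro r _ _ j hj
  have hφj := hφ.mono hj
  refine congrArg sInf (Set.ext fun m => ⟨?_, ?_⟩)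
  · rintro ⟨p, hp, rfl⟩
    obtain ⟨p', hp', hcard⟩ := hφj.exists_gsupp_ncard_eq hG1 hG2 hp
    exact ⟨p', hp', hcard.symm⟩
  · rintro ⟨p, hp, rfl⟩
    obtain ⟨p', hp', hcard⟩ := hφj.symm.exists_gsupp_ncard_eq hG2 hG1 hp
    exact ⟨p', hp', hcard.symm⟩

/-- `(r,j)`-generalized column distances are invariant under `j'`-equivalence
for all `j ≤ j'`. -/
theorem gcdJ_jEquiv_invariant {F : Type*} [Field F] [Fintype F] {n k : ℕ}
    (C1 C2 : Submodule (Polynomial F) (Fin n → Polynomial F))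
    (hk : 1 ≤ k) (hkn : k ≤ n)
    (G1 : Matrix (Fin k) (Fin n) (Polynomial F)) (hG1 : IsGenMat C1 G1)
    (G2 : Matrix (Fin k) (Fin n) (Polynomial F)) (hG2 : IsGenMat C2 G2)
    (φ : C1 ≃ₗ[Polynomial F] C2) (j' : ℕ) (hφ : IsJEquiv C1 C2 φ j') :
    ∀ r : ℕ, 1 ≤ r → r ≤ k → ∀ j : ℕ, j ≤ j' → gcdJ G1 r j = gcdJ G2 r j :=
  gcdJ_jEquiv_invariant_general C1 C2 G1 hG1 G2 hG2 φ j' hφ
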